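/- Every finite poset whose cover graph is a cycle has order dimension at most 3. -/

import Mathlib

section Defs

variable {α : Type*}

/-- `r` is a linear extension of the partial order on `α`. -/
def IsLinExt [PartialOrder α] (r : α → α → Prop) : Prop :=
  IsLinearOrder α r ∧ ∀ a b : α, a ≤ b → r a b

/-- A family of linear orders is a realizer of the partial order on `α`. -/
def IsRealizer [PartialOrder α] {ι : Type*} (L : ι → α → α → Prop) : Prop :=
  (∀ i, IsLinExt (L i)) ∧ ∀ a b : α, a ≤ b ↔ ∀ i, L i a b

/-- The order dimension: minimal size of a realizer. -/
noncomputable def orderDim (α : Type*) [PartialOrder α] : ℕ :=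
  sInf {k | ∃ L : Fin k → α → α → Prop, IsRealizer L}

/-- The cover graph (undirected Hasse diagram) of a poset. -/
def coverGraph (α : Type*) [PartialOrder α] : SimpleGraph α where
  Adj a b := a ⋖ b ∨ b ⋖ a
  symm := ⟨fun a b h => h.elim Or.inr Or.inl⟩
  loopless := ⟨fun a h =>
    h.elim (fun h' => absurd h'.lt (lt_irrefl a)) (fun h' => absurd h'.lt (lt_irrefl a))⟩

/-- The linear order determined by a duplicate-free full list: `a ≤ b` iff `a`
occurs no later than `b`. -/
def listLE [DecidableEq α] (l : List α) (a b : α) : Prop :=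
  l.idxOf a ≤ l.idxOf b

/-- The lists in `ls` are words (each listing all elements of `α` exactly once)
whose associated linear orders are linear extensions of `α` forming a realizer. -/
def IsListRealizer [PartialOrder α] [DecidableEq α] (ls : List (List α)) : Prop :=
  (∀ l ∈ ls, l.Nodup ∧ ∀ a : α, a ∈ l) ∧
  (∀ l ∈ ls, ∀ a b : α, a ≤ b → listLE l a b) ∧
  (∀ a b : α, (∀ l ∈ ls, listLE l a b) → a ≤ b)

/-- A graph is a cycle: connected and 2-regular. -/
def IsCycleGraph {V : Type*} (G : SimpleGraph V) : Prop :=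
  G.Connected ∧ ∀ v : V, (G.neighborSet v).ncard = 2

/-- `Ua a`: elements `x ≠ a` such that the path from `a` to `x` in the cover
graph starts with an upward cover. -/
def Ua [PartialOrder α] (a : α) : Set α :=
  {x | x ≠ a ∧ ∃ p : (coverGraph α).Walk a x, p.IsPath ∧ a ⋖ p.getVert 1}

/-- `Da a`: elements `x ≠ a` such that the path from `a` to `x` in the cover
graph starts with a downward cover. -/
def Da [PartialOrder α] (a : α) : Set α :=
  {x | x ≠ a ∧ ∃ p : (coverGraph α).Walk a x, p.IsPath ∧ p.getVert 1 ⋖ a}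

/-- The grafting order on the disjoint union of rooted posets `(T x, r x)` indexed
by a poset `β`. -/
def graftLE {β : Type*} [PartialOrder β] {T : β → Type*} [∀ x, PartialOrder (T x)]
    (r : ∀ x, T x) (p q : Σ x, T x) : Prop :=
  (∃ h : p.1 = q.1, (h ▸ p.2 : T q.1) ≤ q.2) ∨ (p.1 < q.1 ∧ p.2 ≤ r p.1 ∧ r q.1 ≤ q.2)

end Defs

/-!
Let `m` be a maximal element. Removing `m` from the cycle leaves a path, so the other elements
get injective positions `ι` in `ℤ` such that every cover is a unit step. Along a chain of covers
the position moves in unit steps, so for `x ≠ m` the positions of the elements above `x` other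
than `m` form an interval `[lo x, hi x]`, and `x ≤ y` iff `ι y ∈ [lo x, hi x]`. Sorting by
`(lo, -ι)` and by `(-hi, ι)` gives two linear extensions whose intersection is the order away
from `m`. Put `m` on top of both, and add a third extension listing the down-set of `m`, then
`m`, then the rest.
-/

open Function Set

section Realizer

variable {α β : Type*} [PartialOrder α]

lemma isLinExt_of_injective_of_monotone [LinearOrder β] {φ : α → β} (hinj : Injective φ)
    (hmono : Monotone φ) : IsLinExt fun a b => φ a ≤ φ b :=
  ⟨{ refl := fun a => le_refl (φ a)
     trans := fun _ _ _ => le_trans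
     antisymm := fun _ _ h₁ h₂ => hinj (le_antisymm h₁ h₂)
     total := fun a b => le_total (φ a) (φ b) }, fun _ _ h => hmono h⟩

lemma orderDim_le_three_of_isLinExt {r₁ r₂ r₃ : α → α → Prop} (h₁ : IsLinExt r₁)
    (h₂ : IsLinExt r₂) (h₃ : IsLinExt r₃) (hrefl : ∀ a b, r₁ a b → r₂ a b → r₃ a b → a ≤ b) :
    orderDim α ≤ 3 := by
  refine Nat.sInf_le ⟨![r₁, r₂, r₃], fun i => ?_, fun a b => ⟨fun hab i => ?_, fun h => ?_⟩⟩
  · fin_cases i <;> assumption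
  · fin_cases i
    exacts [h₁.2 a b hab, h₂.2 a b hab, h₃.2 a b hab]
  · exact hrefl a b (h 0) (h 1) (h 2)

end Realizer

section AdjoinMax

variable {α β : Type*} {m : α} {φ : α → β}

lemma injective_update_top [DecidableEq α] (hφ : InjOn φ {m}ᶜ) :
    Injective (update (WithTop.some ∘ φ) m ⊤) := by
  intro a b h
  by_cases ha : a = m <;> by_cases hb : b = m
  · rw [ha, hb]
  · simp [ha, hb] at h
  · simp [ha, hb] at h
  · simp only [update_of_ne ha, update_of_ne hb, comp_apply, WithTop.coe_inj] at h
    exact hφ ha hb h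

lemma monotone_update_top [DecidableEq α] [PartialOrder α] [Preorder β] (hm : IsMax m)
    (hφ : MonotoneOn φ {m}ᶜ) :
    Monotone (update (WithTop.some ∘ φ) m ⊤) := by
  intro a b hab
  by_cases hb : b = m
  · simp [hb]
  have ha : a ≠ m := by rintro rfl; exact hb (le_antisymm (hm hab) hab)
  simpa [ha, hb] using hφ ha hb hab

theorem orderDim_le_three_of_isMax [PartialOrder α] [LinearOrder β] (hm : IsMax m) {ψ : α → β}
    (hφi : InjOn φ {m}ᶜ) (hψi : InjOn ψ {m}ᶜ) (hφ : MonotoneOn φ {m}ᶜ) (hψ : MonotoneOn ψ {m}ᶜ)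
    (hrefl : ∀ a ≠ m, ∀ b ≠ m, φ a ≤ φ b → ψ a ≤ ψ b → a ≤ b) : orderDim α ≤ 3 := by
  classical
  set φ' := update (WithTop.some ∘ φ) m ⊤
  -- `Prop` is ordered by implication, so the first coordinate puts the down-set of `m` first.
  set key : α → Prop ×ₗ WithTop β := fun x => toLex (¬ x ≤ m, φ' x)
  have hkey_inj : Injective key := fun a b h =>
    injective_update_top hφi (congrArg (Prod.snd ∘ ofLex) h)
  have hnot_le : Monotone fun x => ¬ x ≤ m := fun a b hab (ha : ¬ a ≤ m) hb => ha (hab.trans hb)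
  have hkey_mono : Monotone key :=
    Prod.Lex.toLex_mono.comp (hnot_le.prodMk (monotone_update_top hm hφ))
  refine orderDim_le_three_of_isLinExt
    (isLinExt_of_injective_of_monotone (injective_update_top hφi) (monotone_update_top hm hφ))
    (isLinExt_of_injective_of_monotone (injective_update_top hψi) (monotone_update_top hm hψ))
    (isLinExt_of_injective_of_monotone hkey_inj hkey_mono) fun a b h₁ h₂ h₃ => ?_
  by_cases ha : a = m
  · have hb : b = m := by
      by_contra hb
      simp [ha, hb] at h₁
    rw [ha, hb]
  by_cases hb : b = m
  · subst hb
    have h := (Prod.Lex.toLex_le_toLex'.mp h₃).1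
    by_contra hab
    exact h hab le_rfl
  simp only [update_of_ne ha, update_of_ne hb, comp_apply, WithTop.coe_le_coe] at h₁ h₂
  exact hrefl a ha b hb h₁ h₂

end AdjoinMax

section PathIndexing

variable {α : Type*} [PartialOrder α] {m : α} {ι : α → ℤ}

def upIndices (m : α) (ι : α → ℤ) (x : α) : Set ℤ :=
  ι '' {y | x ≤ y ∧ y ≠ m}

lemma antitone_upIndices : Antitone (upIndices m ι) :=
  fun _ _ hxy => image_mono fun _ ⟨hy, hym⟩ => ⟨hxy.trans hy, hym⟩

lemma self_mem_upIndices {x : α} (hx : x ≠ m) : ι x ∈ upIndices m ι x :=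
  ⟨x, ⟨le_rfl, hx⟩, rfl⟩

lemma le_iff_mem_upIndices (hinj : InjOn ι {m}ᶜ) {x y : α} (hy : y ≠ m) :
    x ≤ y ↔ ι y ∈ upIndices m ι x :=
  ⟨fun h => ⟨y, ⟨h, hy⟩, rfl⟩, fun ⟨_, ⟨hxz, hz⟩, hzy⟩ => hinj hz hy hzy ▸ hxz⟩

lemma finite_upIndices [Finite α] (x : α) : (upIndices m ι x).Finite :=
  (toFinite _).image ι

variable (hm : IsMax m) (hcov : ∀ x y, x ⋖ y → x ≠ m → y ≠ m → ι y = ι x + 1 ∨ ι x = ι y + 1)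
include hm hcov

lemma uIcc_subset_upIndices [LocallyFiniteOrder α] {x y : α} (hxy : x ≤ y) (hy : y ≠ m) :
    uIcc (ι x) (ι y) ⊆ upIndices m ι x := by
  induction le_iff_reflTransGen_covBy.mp hxy with
  | refl =>
    intro k hk
    rw [uIcc_self, mem_singleton_iff] at hk
    exact hk ▸ self_mem_upIndices hy
  | @tail b c hxb hbc ih =>
    have hb : b ≠ m := by rintro rfl; exact hm.not_lt hbc.lt
    have hstep := hcov b c hbc hb hy
    intro k hk
    by_cases hkc : k = ι c
    · exact ⟨c, ⟨(le_iff_reflTransGen_covBy.mpr hxb).trans hbc.le, hy⟩, hkc.symm⟩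
    · refine ih (le_iff_reflTransGen_covBy.mpr hxb) hb ?_
      rw [mem_uIcc] at hk ⊢
      omega

lemma ordConnected_upIndices [LocallyFiniteOrder α] (x : α) :
    (upIndices m ι x).OrdConnected := by
  refine ⟨?_⟩
  rintro _ ⟨y, ⟨hxy, hy⟩, rfl⟩ _ ⟨z, ⟨hxz, hz⟩, rfl⟩ k ⟨hyk, hkz⟩
  rcases le_total k (ι x) with hkx | hxk
  · exact uIcc_subset_upIndices hm hcov hxy hy (mem_uIcc.mpr (Or.inr ⟨hyk, hkx⟩))
  · exact uIcc_subset_upIndices hm hcov hxz hz (mem_uIcc.mpr (Or.inl ⟨hxk, hkz⟩))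

lemma upIndices_eq_Icc [Finite α] [LocallyFiniteOrder α] {x : α} (hx : x ≠ m) :
    upIndices m ι x = Icc (sInf (upIndices m ι x)) (sSup (upIndices m ι x)) := by
  have hfin := finite_upIndices (m := m) (ι := ι) x
  have hne : (upIndices m ι x).Nonempty := ⟨_, self_mem_upIndices hx⟩
  exact (subset_Icc_csInf_csSup hfin.bddBelow hfin.bddAbove).antisymm <|
    (ordConnected_upIndices hm hcov x).out (hne.csInf_mem hfin) (hne.csSup_mem hfin)

theorem orderDim_le_three_of_injOn_covBy [Finite α] (hinj : InjOn ι {m}ᶜ) : orderDim α ≤ 3 := by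
  let _ : LocallyFiniteOrder α := LocallyFiniteOrder.ofFiniteIcc fun _ _ => toFinite _
  set lo := fun x => sInf (upIndices m ι x)
  set hi := fun x => sSup (upIndices m ι x)
  have hle : ∀ {x y}, x ≠ m → y ≠ m → (x ≤ y ↔ lo x ≤ ι y ∧ ι y ≤ hi x) := fun hx hy => by
    rw [le_iff_mem_upIndices hinj hy, upIndices_eq_Icc hm hcov hx]
    rfl
  have hself : ∀ {x}, x ≠ m → lo x ≤ ι x ∧ ι x ≤ hi x := fun hx => (hle hx hx).mp le_rfl
  have hlo : ∀ {x y}, x ≤ y → y ≠ m → lo x ≤ lo y := fun hxy hy =>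
    csInf_le_csInf (finite_upIndices _).bddBelow ⟨_, self_mem_upIndices hy⟩ (antitone_upIndices hxy)
  have hhi : ∀ {x y}, x ≤ y → y ≠ m → hi y ≤ hi x := fun hxy hy =>
    csSup_le_csSup (finite_upIndices _).bddAbove ⟨_, self_mem_upIndices hy⟩ (antitone_upIndices hxy)
  refine orderDim_le_three_of_isMax hm (φ := fun x => toLex (lo x, -ι x))
    (ψ := fun x => toLex (-hi x, ι x)) ?_ ?_ ?_ ?_ ?_
  · exact fun a ha b hb h => hinj ha hb (neg_inj.mp (congrArg (Prod.snd ∘ ofLex) h))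
  · exact fun a ha b hb h => hinj ha hb (congrArg (Prod.snd ∘ ofLex) h)
  · intro a ha b hb hab
    refine Prod.Lex.toLex_le_toLex'.mpr ⟨hlo hab hb, fun heq => neg_le_neg_iff.mpr ?_⟩
    by_contra hlt
    have hba : b ≤ a := (hle hb ha).mpr
      ⟨(show lo a = lo b from heq) ▸ (hself ha).1, (not_le.mp hlt).le.trans (hself hb).2⟩
    exact hlt (le_antisymm hab hba ▸ le_rfl)
  · intro a ha b hb hab
    refine Prod.Lex.toLex_le_toLex'.mpr ⟨neg_le_neg (hhi hab hb), fun heq => ?_⟩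
    by_contra hlt
    have hba : b ≤ a := (hle hb ha).mpr
      ⟨(hself hb).1.trans (not_le.mp hlt).le, neg_inj.mp heq ▸ (hself ha).2⟩
    exact hlt (le_antisymm hab hba ▸ le_rfl)
  · intro a ha b hb h₁ h₂
    have hlo_ab := (Prod.Lex.toLex_le_toLex'.mp h₁).1
    have hhi_ba := neg_le_neg_iff.mp (Prod.Lex.toLex_le_toLex'.mp h₂).1
    exact (hle ha hb).mpr ⟨hlo_ab.trans (hself hb).1, (hself hb).2.trans hhi_ba⟩

end PathIndexing

namespace IsCycleGraph

open SimpleGraph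

variable {V : Type*} {G : SimpleGraph V}

lemma isCycles (hG : IsCycleGraph G) : G.IsCycles :=
  fun v _ => hG.2 v

lemma exists_isCycle_forall_mem_support [Finite V] (hG : IsCycleGraph G) (v : V) :
    ∃ w : G.Walk v v, w.IsCycle ∧ ∀ x, x ∈ w.support := by
  have hnbr : (G.neighborSet v).Nonempty := Set.nonempty_of_ncard_ne_zero (by rw [hG.2 v]; omega)
  obtain ⟨w, hw, hverts⟩ := hG.isCycles.exists_cycle_toSubgraph_verts_eq_connectedComponentSupp
    (c := G.connectedComponentMk v) rfl hnbr
  refine ⟨w, hw, fun x => ?_⟩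
  rw [← Walk.mem_verts_toSubgraph, hverts, ConnectedComponent.mem_supp_iff,
    ConnectedComponent.eq]
  exact (hG.1 v x).symm

lemma exists_injective_adj_consecutive [Finite V] (hG : IsCycleGraph G) (v : V) :
    ∃ ι : V → ℤ, Injective ι ∧
      ∀ x y, G.Adj x y → x ≠ v → y ≠ v → ι y = ι x + 1 ∨ ι x = ι y + 1 := by
  classical
  have := Fintype.ofFinite V
  obtain ⟨w, hw, hsupp⟩ := hG.exists_isCycle_forall_mem_support v
  have hlen := hw.three_le_length
  have hidx : ∀ x, ∃ k < w.length, w.getVert k = x := by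
    intro x
    obtain ⟨k, rfl, hk⟩ := Walk.mem_support_iff_exists_getVert.mp (hsupp x)
    rcases hk.lt_or_eq with hk | rfl
    · exact ⟨k, hk, rfl⟩
    · exact ⟨0, by omega, by simp⟩
  choose κ hκlt hκ using hidx
  have hκ_getVert : ∀ i < w.length, κ (w.getVert i) = i := fun i hi =>
    hw.getVert_injOn' (by simp only [mem_ofPred_eq]; have := hκlt (w.getVert i); omega)
      (by simp only [mem_ofPred_eq]; omega) (hκ _)
  refine ⟨fun x => κ x, fun x y h => ?_, fun x y hxy hx hy => ?_⟩
  · rw [← hκ x, ← hκ y, Nat.cast_inj.mp h]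
  have hadj := (hw.adj_toSubgraph_iff_of_isCycles hG.isCycles
    (w.mem_verts_toSubgraph.mpr (hsupp x)) y).mpr hxy
  obtain ⟨i, he, hi⟩ := w.toSubgraph_adj_iff.mp hadj
  have hnext : w.getVert (i + 1) ≠ v → i + 1 < w.length := fun hne => by
    by_contra hge
    exact hne (by rw [show i + 1 = w.length by omega, Walk.getVert_length])
  rcases Sym2.eq_iff.mp he with ⟨rfl, rfl⟩ | ⟨rfl, rfl⟩
  · exact Or.inl (by simp [hκ_getVert i hi, hκ_getVert (i + 1) (hnext hy)])
  · exact Or.inr (by simp [hκ_getVert i hi, hκ_getVert (i + 1) (hnext hx)])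

end IsCycleGraph

/-- a finite poset whose cover graph is a cycle has order
dimension at most `3`. -/
theorem cycle_poset_dim_le_three {α : Type*} [PartialOrder α] [Fintype α]
    (hc : IsCycleGraph (coverGraph α)) : orderDim α ≤ 3 := by
  obtain ⟨a⟩ := hc.1.nonempty
  obtain ⟨m, -, hm⟩ := Finite.exists_le_maximal (p := fun _ : α => True) (a := a) trivial
  obtain ⟨ι, hinj, hadj⟩ := hc.exists_injective_adj_consecutive m
  exact orderDim_le_three_of_injOn_covBy (fun _ hb => hm.2 trivial hb)
    (fun x y hxy => hadj x y (Or.inl hxy)) hinj.injOn
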